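/- Let α, β, γ, δ ∈ ℝ with α + δ ≠ 0 and αγ − βδ = 0. Then (𝔤₆, g, J) is a second kind algebraic Wanas soliton associated to the canonical connection ∇⁰ if and only if one of the following holds: (i) α ≠ 0, β = γ = δ = 0, α² + c = 0, with De₁ = 0, De₂ = 0, De₃ = α²e₃; (ii) β = γ = 0, δ ≠ 0, α² + δ² + c = 0, with De₁ = 0, De₂ = δ²e₂, De₃ = (α²+δ²)e₃; (iii) β ≠ 0, δ ≠ 0, γ = −β, δ = −α, α² = β², α² + c = 0, with De₁ = 0, De₂ = −α²e₂ − αβe₃, De₃ = αβe₂ + α²e₃. -/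
import Mathlib
set_option maxHeartbeats 1000000


noncomputable section

/-- The underlying vector space `ℝ³`. -/
abbrev V : Type := Fin 3 → ℝ

/-- The basis vector `e₁`. -/
def e1 : V := ![1, 0, 0]

/-- The basis vector `e₂`. -/
def e2 : V := ![0, 1, 0]

/-- The basis vector `e₃`. -/
def e3 : V := ![0, 0, 1]

/-- The Lorentzian metric `g` with `g(e₁,e₁) = g(e₂,e₂) = 1`, `g(e₃,e₃) = -1`. -/
def g (x y : V) : ℝ := x 0 * y 0 + x 1 * y 1 - x 2 * y 2

/-- The Lie bracket. -/
def br (α β γ δ : ℝ) (x y : V) : V :=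
  (x 0 * y 1 - x 1 * y 0) • (α • e2 + β • e3) + (x 0 * y 2 - x 2 * y 0) • (γ • e2 + δ • e3)

/-- The canonical connection `∇⁰`. -/
def nab (α β γ δ : ℝ) (x y : V) : V :=
  (x 1 * y 0) • (-(α • e2)) + (x 1 * y 1) • (α • e1) + (x 2 * y 0) • (((β - γ) / 2) • e2) +
    (x 2 * y 1) • (-(((β - γ) / 2) • e1))

/-- The torsion `T⁰(X,Y) = ∇⁰_X Y - ∇⁰_Y X - [X,Y]`. -/
def T (α β γ δ : ℝ) (x y : V) : V := nab α β γ δ x y - nab α β γ δ y x - br α β γ δ x y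

/-- The tensor `A⁰(X,Y)Z = T⁰(T⁰(X,Y),Z)`. -/
def A (α β γ δ : ℝ) (x y z : V) : V := T α β γ δ (T α β γ δ x y) z

/-- The curvature `R⁰(X,Y)Z = ∇⁰_X ∇⁰_Y Z - ∇⁰_Y ∇⁰_X Z - ∇⁰_{[X,Y]} Z`. -/
def Rc (α β γ δ : ℝ) (x y z : V) : V :=
  nab α β γ δ x (nab α β γ δ y z) - nab α β γ δ y (nab α β γ δ x z) - nab α β γ δ (br α β γ δ x y) z

/-- The Wanas tensor `W⁰(X,Y)Z = R⁰(X,Y)Z - A⁰(X,Y)Z`. -/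
def W (α β γ δ : ℝ) (x y z : V) : V := Rc α β γ δ x y z - A α β γ δ x y z

/-- `w⁰(X,Y) = -g(W⁰(X,e₁)Y,e₁) - g(W⁰(X,e₂)Y,e₂) + g(W⁰(X,e₃)Y,e₃)`. -/
def w (α β γ δ : ℝ) (x y : V) : ℝ :=
  -g (W α β γ δ x e1 y) e1 - g (W α β γ δ x e2 y) e2 + g (W α β γ δ x e3 y) e3

/-- `w̃⁰(X,Y) = (w⁰(X,Y) + w⁰(Y,X))/2`. -/
def wt (α β γ δ : ℝ) (x y : V) : ℝ := (w α β γ δ x y + w α β γ δ y x) / 2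

/-- `D` is a derivation of the Lie algebra. -/
def IsDeriv (α β γ δ : ℝ) (D : V →ₗ[ℝ] V) : Prop :=
  ∀ x y, D (br α β γ δ x y) = br α β γ δ (D x) y + br α β γ δ x (D y)

lemma basis_decomp (x : V) : x = x 0 • e1 + x 1 • e2 + x 2 • e3 := by
  funext i; fin_cases i <;> simp [e1, e2, e3]

lemma lmap_apply (D : V →ₗ[ℝ] V) (x : V) :
    D x = x 0 • D e1 + x 1 • D e2 + x 2 • D e3 := by
  conv_lhs => rw [basis_decomp x]
  simp

lemma wt_vals (α β γ δ : ℝ) :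
    wt α β γ δ e1 e1 = -(α^2+δ^2+(β^2+3*β*γ)/2) ∧
    wt α β γ δ e1 e2 = 0 ∧ wt α β γ δ e1 e3 = 0 ∧
    wt α β γ δ e2 e1 = 0 ∧
    wt α β γ δ e2 e2 = -α^2-(β^2-β*γ)/2 ∧
    wt α β γ δ e2 e3 = (γ*δ-β*δ)/4 - α*γ/2 ∧
    wt α β γ δ e3 e1 = 0 ∧
    wt α β γ δ e3 e2 = (γ*δ-β*δ)/4 - α*γ/2 ∧
    wt α β γ δ e3 e3 = (β^2-γ^2)/2 := by
  refine ⟨?_,?_,?_,?_,?_,?_,?_,?_,?_⟩ <;> (simp [wt, w, W, Rc, A, T, nab, br, g, e1, e2, e3]; try ring)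

lemma g_e1 (v : V) : g v e1 = v 0 := by simp [g, e1]
lemma g_e2 (v : V) : g v e2 = v 1 := by simp [g, e2]
lemma g_e3 (v : V) : g v e3 = -v 2 := by simp [g, e3]

lemma tWan_mat (α β γ δ : ℝ) (tWan : V →ₗ[ℝ] V)
    (htWan : ∀ x y, wt α β γ δ x y = g (tWan x) y) :
    tWan e1 = ![-(α^2+δ^2+(β^2+3*β*γ)/2), 0, 0] ∧
    tWan e2 = ![0, -α^2-(β^2-β*γ)/2, -((γ*δ-β*δ)/4 - α*γ/2)] ∧
    tWan e3 = ![0, (γ*δ-β*δ)/4 - α*γ/2, -((β^2-γ^2)/2)] := by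
  obtain ⟨w11,w12,w13,w21,w22,w23,w31,w32,w33⟩ := wt_vals α β γ δ
  have h11 := htWan e1 e1; have h12 := htWan e1 e2; have h13 := htWan e1 e3
  have h21 := htWan e2 e1; have h22 := htWan e2 e2; have h23 := htWan e2 e3
  have h31 := htWan e3 e1; have h32 := htWan e3 e2; have h33 := htWan e3 e3
  rw [g_e1, w11] at h11; rw [g_e2, w12] at h12; rw [g_e3, w13] at h13
  rw [g_e1, w21] at h21; rw [g_e2, w22] at h22; rw [g_e3, w23] at h23
  rw [g_e1, w31] at h31; rw [g_e2, w32] at h32; rw [g_e3, w33] at h33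
  refine ⟨?_, ?_, ?_⟩ <;> funext i <;> fin_cases i <;> simp <;> linarith

lemma back_dir (α δ c : ℝ) (hc : α^2+δ^2+c = 0) (tWan D : V →ₗ[ℝ] V)
    (htWan : ∀ x y, wt α 0 0 δ x y = g (tWan x) y)
    (hD1 : D e1 = 0) (hD2 : D e2 = δ^2 • e2) (hD3 : D e3 = (α^2+δ^2) • e3) :
    IsDeriv α 0 0 δ D ∧ ∀ x, tWan x = c • x + D x := by
  obtain ⟨ht1, ht2, ht3⟩ := tWan_mat α 0 0 δ tWan htWan
  constructor
  · intro x y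
    rw [lmap_apply D (br α 0 0 δ x y), lmap_apply D x, lmap_apply D y, hD1, hD2, hD3]
    funext i; fin_cases i <;> (simp [br, e1, e2, e3]; try ring)
  · intro x
    rw [lmap_apply tWan x, lmap_apply D x, hD1, hD2, hD3, ht1, ht2, ht3]
    funext i; fin_cases i
    · simp [e1, e2, e3]; linear_combination (-(x 0)) * hc
    · simp [e1, e2, e3]; linear_combination (-(x 1)) * hc
    · simp [e1, e2, e3]; linear_combination (-(x 2)) * hc

theorem g6_second_kind_algebraic_Wanas_soliton (α β γ δ : ℝ)
    (h1 : α + δ ≠ 0) (h2 : α * γ - β * δ = 0)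
    (tWan : V →ₗ[ℝ] V) (htWan : ∀ x y, wt α β γ δ x y = g (tWan x) y)
    (c : ℝ) (D : V →ₗ[ℝ] V) :
    (IsDeriv α β γ δ D ∧ ∀ x, tWan x = c • x + D x) ↔
      (α ≠ 0 ∧ β = 0 ∧ γ = 0 ∧ δ = 0 ∧ α ^ 2 + c = 0 ∧
        D e1 = 0 ∧ D e2 = 0 ∧ D e3 = α ^ 2 • e3) ∨
      (β = 0 ∧ γ = 0 ∧ δ ≠ 0 ∧ α ^ 2 + δ ^ 2 + c = 0 ∧
        D e1 = 0 ∧ D e2 = δ ^ 2 • e2 ∧ D e3 = (α ^ 2 + δ ^ 2) • e3) ∨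
      (β ≠ 0 ∧ δ ≠ 0 ∧ γ = -β ∧ δ = -α ∧ α ^ 2 = β ^ 2 ∧ α ^ 2 + c = 0 ∧
        D e1 = 0 ∧ D e2 = -(α ^ 2 • e2) - (α * β) • e3 ∧
        D e3 = (α * β) • e2 + α ^ 2 • e3) := by
  constructor
  · rintro ⟨hder, heq⟩
    obtain ⟨ht1, ht2, ht3⟩ := tWan_mat α β γ δ tWan htWan
    have hD1 : D e1 = ![-(α^2+δ^2+(β^2+3*β*γ)/2) - c, 0, 0] := by
      have h := heq e1; rw [ht1] at h
      funext i; fin_cases i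
      · have hi := congrFun h 0; simp [e1] at hi ⊢; linarith
      · have hi := congrFun h 1; simp [e1] at hi ⊢; linarith
      · have hi := congrFun h 2; simp [e1] at hi ⊢; linarith
    have hD2 : D e2 = ![0, (-α^2-(β^2-β*γ)/2) - c, -((γ*δ-β*δ)/4 - α*γ/2)] := by
      have h := heq e2; rw [ht2] at h
      funext i; fin_cases i
      · have hi := congrFun h 0; simp [e2] at hi ⊢; linarith
      · have hi := congrFun h 1; simp [e2] at hi ⊢; linarith
      · have hi := congrFun h 2; simp [e2] at hi ⊢; linarith
    have hD3 : D e3 = ![0, (γ*δ-β*δ)/4 - α*γ/2, -((β^2-γ^2)/2) - c] := by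
      have h := heq e3; rw [ht3] at h
      funext i; fin_cases i
      · have hi := congrFun h 0; simp [e3] at hi ⊢; linarith
      · have hi := congrFun h 1; simp [e3] at hi ⊢; linarith
      · have hi := congrFun h 2; simp [e3] at hi ⊢; linarith
    have hb12 : br α β γ δ e1 e2 = α • e2 + β • e3 := by
      funext i; fin_cases i <;> simp [br, e1, e2, e3]
    have hb13 : br α β γ δ e1 e3 = γ • e2 + δ • e3 := by
      funext i; fin_cases i <;> simp [br, e1, e2, e3]
    have hd12 := hder e1 e2
    rw [hb12] at hd12
    simp only [map_add, map_smul] at hd12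
    rw [hD1, hD2, hD3] at hd12
    have G1 := congrFun hd12 1
    have G2 := congrFun hd12 2
    simp [br, e1, e2, e3] at G1 G2
    have hd13 := hder e1 e3
    rw [hb13] at hd13
    simp only [map_add, map_smul] at hd13
    rw [hD1, hD2, hD3] at hd13
    have G3 := congrFun hd13 1
    have G4 := congrFun hd13 2
    simp [br, e1, e2, e3] at G3 G4
    have hP : c + α^2 + δ^2 + (β^2+3*β*γ)/2 = 0 := by
      have hsum : (α+δ) * (c + α^2 + δ^2 + (β^2+3*β*γ)/2) = 0 := by
        linear_combination G1 + G4
      exact (mul_eq_zero.mp hsum).resolve_left h1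
    have hq : ((β*δ-γ*δ)/4 + α*γ/2) * (β+γ) = 0 := by
      linear_combination α * hP - G1
    have hA : ((β*δ-γ*δ)/4 + α*γ/2) * (α-δ) + β * (α^2 + (γ^2-β*γ)/2) = 0 := by
      linear_combination G2 - β * hP
    have hB : ((β*δ-γ*δ)/4 + α*γ/2) * (α-δ) - γ * (α^2 + (γ^2-β*γ)/2) = 0 := by
      linear_combination G3 - γ * hP
    have hbg0 : β = 0 ∧ γ = 0 := by
      by_cases hbg : β + γ = 0
      · have hb : β * (α + δ) = 0 := by linear_combination α * hbg - h2
        rcases mul_eq_zero.mp hb with h | h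
        · exact ⟨h, by linarith⟩
        · exact absurd h h1
      · have hq0 : (β*δ-γ*δ)/4 + α*γ/2 = 0 :=
          (mul_eq_zero.mp hq).resolve_right hbg
        have hA' : β * (α^2 + (γ^2-β*γ)/2) = 0 := by
          linear_combination hA - (α-δ) * hq0
        have hB' : γ * (α^2 + (γ^2-β*γ)/2) = 0 := by
          linear_combination (α-δ) * hq0 - hB
        by_cases hb : β = 0
        · refine ⟨hb, ?_⟩
          subst hb
          by_contra hg
          have hαγ : α * γ = 0 := by linear_combination h2
          have hα : α = 0 := (mul_eq_zero.mp hαγ).resolve_right hg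
          have h3 : γ ^ 3 = 0 := by linear_combination 2 * hB' - 2*γ*α*hα
          exact hg (pow_eq_zero_iff (three_ne_zero) |>.mp h3)
        · have hs : α^2 + (γ^2-β*γ)/2 = 0 := (mul_eq_zero.mp hA').resolve_left hb
          have hd : δ * (3*β - γ) = 0 := by linear_combination 4 * hq0 - 2 * h2
          rcases mul_eq_zero.mp hd with hδ | h3b
          · have hαne : α ≠ 0 := fun h => h1 (by rw [h, hδ]; ring)
            have hαγ : α * γ = 0 := by linear_combination h2 + β * hδ
            have hγ : γ = 0 := (mul_eq_zero.mp hαγ).resolve_left hαne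
            have hα2 : α ^ 2 = 0 := by rw [hγ] at hs; linarith [hs]
            exact absurd (pow_eq_zero_iff two_ne_zero |>.mp hα2) hαne
          · have hγ : γ = 3*β := by linarith
            have hsum : α^2 + 3*β^2 = 0 := by rw [hγ] at hs; nlinarith [hs]
            have hb0 : β = 0 := by nlinarith [sq_nonneg α, sq_nonneg β]
            exact absurd hb0 hb
    obtain ⟨hb0, hg0⟩ := hbg0
    subst hb0; subst hg0
    have hc' : α^2 + δ^2 + c = 0 := by linarith [hP]
    have hD1' : D e1 = 0 := by
      rw [hD1]; funext i; fin_cases i <;> simp <;> linarith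
    have hD2' : D e2 = δ^2 • e2 := by
      rw [hD2]; funext i; fin_cases i <;> simp [e2] <;> linarith
    have hD3' : D e3 = (α^2+δ^2) • e3 := by
      rw [hD3]; funext i; fin_cases i <;> simp [e3] <;> linarith
    by_cases hδ : δ = 0
    · left
      refine ⟨fun h => h1 (by rw [h, hδ]; ring), rfl, rfl, hδ,
        by rw [hδ] at hc'; linarith, hD1', ?_, ?_⟩
      · rw [hD2', hδ]; simp
      · rw [hD3', hδ]; simp
    · right; left; exact ⟨rfl, rfl, hδ, hc', hD1', hD2', hD3'⟩
  · rintro (⟨hα, hb, hg, hδ, hc, hD1, hD2, hD3⟩ | ⟨hb, hg, hδ, hc, hD1, hD2, hD3⟩ |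
      ⟨hb, hδ, hg, hδα, hab, hc, hD1, hD2, hD3⟩)
    · subst hb; subst hg; subst hδ
      exact back_dir α 0 c (by linear_combination hc) tWan D htWan hD1
        (by rw [hD2]; norm_num) (by rw [hD3]; norm_num)
    · subst hb; subst hg
      exact back_dir α δ c hc tWan D htWan hD1 hD2 hD3
    · exact absurd (show α + δ = 0 by rw [hδα]; ring) h1
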